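/- Let x₁,…,xₙ ∈ R^d be unit vectors with invertible ReLU-kernel Gram matrix H^∞. If yᵢ = α(βᵀxᵢ)^{2l} for all i, for some positive integer l, β ∈ R^d, α ∈ R, then yᵀ(H^∞)^{-1}y ≤ 2π(2l−1)²α²‖β‖₂^{4l}. -/

import Mathlib

/-!
Write `t = ⟨xᵢ, xⱼ⟩`. Since `π - arccos t = π/2 + arcsin t`, and on all of `[-1, 1]`
`arcsin t = ∑ cₖ t^(2k+1)` with `cₖ = C(2k, k) / (4^k (2k+1)) ≥ 0`, the matrix `2π H^∞` is
`(π/2) G` plus `∑ cₖ G^∘(2k+2)`, where `G^∘p = (⟨xᵢ, xⱼ⟩^p)` is a Gram matrix (of the tensor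
powers `xᵢ^⊗p`), hence positive semidefinite. So `c_{l-1} zᵀ G^∘(2l) z ≤ 2π zᵀ H^∞ z` for every
`z`. Take `z = (H^∞)⁻¹ y`, so that `s := yᵀ (H^∞)⁻¹ y = zᵀ H^∞ z = zᵀ y`. Cauchy–Schwarz between
`β^⊗2l` and `∑ zᵢ xᵢ^⊗2l` gives `s² ≤ α² ‖β‖^(4l) zᵀ G^∘(2l) z ≤ 2π α² ‖β‖^(4l) s / c_{l-1}`,
and `1 / c_{l-1} ≤ (2l-1)²` because `4^m ≤ (2m+1) C(2m, m)`.
-/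

open Finset Real Matrix
open scoped RealInnerProductSpace

lemma prod_range_add_half_div_factorial (k : ℕ) :
    (∏ j ∈ range k, ((j : ℝ) + 1 / 2)) / k.factorial = k.centralBinom / 4 ^ k := by
  induction k with
  | zero => simp
  | succ k ih =>
    have hrec : ((k : ℝ) + 1) * (k + 1).centralBinom = 2 * (2 * k + 1) * k.centralBinom := by
      exact_mod_cast Nat.succ_mul_centralBinom_succ k
    calc (∏ j ∈ range (k + 1), ((j : ℝ) + 1 / 2)) / (k + 1).factorial
        = (∏ j ∈ range k, ((j : ℝ) + 1 / 2)) / k.factorial * ((k + 1 / 2) / (k + 1)) := by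
          rw [prod_range_succ, Nat.factorial_succ, Nat.cast_mul, mul_comm ((k + 1 : ℕ) : ℝ),
            mul_div_mul_comm]
          push_cast; rfl
      _ = (k + 1).centralBinom / 4 ^ (k + 1) := by
          rw [ih, pow_succ]; field_simp
          linear_combination -2 * hrec

lemma ring_choose_half_add_sub_one (k : ℕ) :
    Ring.choose ((1 / 2 : ℝ) + k - 1) k = k.centralBinom / 4 ^ k := by
  rw [Ring.choose_eq_smul, ← Polynomial.aeval_eq_smeval, Polynomial.aeval_def,
    Polynomial.eval₂_eq_eval_map, descPochhammer_map, descPochhammer_eval_eq_prod_range,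
    ← prod_range_add_half_div_factorial, ← prod_range_reflect, smul_eq_mul, inv_mul_eq_div]
  congr 1
  refine prod_congr rfl fun j hj => ?_
  rw [mem_range] at hj
  rw [Nat.cast_sub (by omega), Nat.cast_sub (by omega)]
  push_cast; ring

lemma hasSum_centralBinom_div_mul_pow {x : ℝ} (hx : |x| < 1) :
    HasSum (fun k => (k.centralBinom / 4 ^ k : ℝ) * x ^ k) (√(1 - x))⁻¹ := by
  have h := (one_div_one_sub_rpow_hasFPowerSeriesOnBall_zero (1 / 2)).hasSum (y := x)
    (by simpa [Metric.mem_eball, edist_zero_right, enorm_eq_nnnorm, ← NNReal.coe_lt_coe] using hx)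
  rw [FormalMultilinearSeries.ofScalars_apply_eq', zero_add, one_div (_ ^ _)] at h
  simp_rw [ring_choose_half_add_sub_one, smul_eq_mul] at h
  rwa [sqrt_eq_rpow]

lemma abs_sq_lt_one {t : ℝ} (ht : |t| < 1) : |t ^ 2| < 1 := by
  rw [abs_pow]; exact pow_lt_one₀ (abs_nonneg t) ht two_ne_zero

noncomputable def arcsinCoeff (k : ℕ) : ℝ := k.centralBinom / (4 ^ k * (2 * k + 1))

lemma arcsinCoeff_nonneg (k : ℕ) : 0 ≤ arcsinCoeff k := by unfold arcsinCoeff; positivity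

lemma arcsinCoeff_mul (k : ℕ) : arcsinCoeff k * (2 * k + 1) = k.centralBinom / 4 ^ k := by
  unfold arcsinCoeff; field_simp

lemma one_le_sq_mul_arcsinCoeff (k : ℕ) : 1 ≤ (2 * k + 1) ^ 2 * arcsinCoeff k := by
  have h : (4 : ℝ) ^ k ≤ (2 * k + 1) * k.centralBinom := by
    exact_mod_cast k.centralBinom_eq_two_mul_choose ▸
      Nat.four_pow_le_two_mul_add_one_mul_central_binom k
  calc 1 ≤ (2 * k + 1) * k.centralBinom / (4 : ℝ) ^ k := by
        rwa [one_le_div (by positivity)]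
    _ = (2 * k + 1) ^ 2 * arcsinCoeff k := by unfold arcsinCoeff; field_simp

lemma summable_arcsinCoeff_mul_pow {t : ℝ} (ht : |t| < 1) :
    Summable fun k => arcsinCoeff k * t ^ (2 * k + 1) := by
  refine (hasSum_centralBinom_div_mul_pow (abs_sq_lt_one ht)).summable.of_norm_bounded
    fun k => ?_
  rw [norm_mul, norm_pow, Real.norm_of_nonneg (arcsinCoeff_nonneg k), Real.norm_eq_abs,
    ← arcsinCoeff_mul, ← pow_mul, ← (even_two_mul k).pow_abs]
  calc arcsinCoeff k * |t| ^ (2 * k + 1) = arcsinCoeff k * |t| * |t| ^ (2 * k) := by ring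
    _ ≤ arcsinCoeff k * (2 * k + 1) * |t| ^ (2 * k) := by
      gcongr
      · exact arcsinCoeff_nonneg k
      · linarith [k.cast_nonneg (α := ℝ)]

lemma hasDerivAt_tsum_arcsinCoeff_mul_pow {y : ℝ} (hy : |y| < 1) :
    HasDerivAt (fun t => ∑' k, arcsinCoeff k * t ^ (2 * k + 1)) (1 / √(1 - y ^ 2)) y := by
  set r := (|y| + 1) / 2
  have hyr : |y| < r := by simp only [r]; linarith
  have hr : |r| < 1 := by rw [abs_of_pos (by positivity)]; simp only [r]; linarith
  have hderiv : ∀ (k : ℕ) (t : ℝ), HasDerivAt (fun t => arcsinCoeff k * t ^ (2 * k + 1))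
      (k.centralBinom / 4 ^ k * (t ^ 2) ^ k) t := fun k t =>
    ((hasDerivAt_pow (2 * k + 1) t).const_mul (arcsinCoeff k)).congr_deriv (by
      rw [← arcsinCoeff_mul, ← pow_mul]; push_cast; ring)
  have hbound : ∀ (k : ℕ), ∀ t ∈ Set.Ioo (-r) r,
      ‖(k.centralBinom / 4 ^ k : ℝ) * (t ^ 2) ^ k‖ ≤ k.centralBinom / 4 ^ k * (r ^ 2) ^ k := by
    intro k t ht
    rw [norm_mul, norm_pow, Real.norm_of_nonneg (by positivity),
      Real.norm_of_nonneg (by positivity)]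
    gcongr ?_ * ?_
    exact pow_le_pow_left₀ (sq_nonneg t) (sq_le_sq' ht.1.le ht.2.le) k
  have h := hasDerivAt_tsum_of_isPreconnected
    (hasSum_centralBinom_div_mul_pow (abs_sq_lt_one hr)).summable isOpen_Ioo isPreconnected_Ioo
    (fun k t _ => hderiv k t) hbound (y₀ := 0) (by simpa using hyr.trans_le' (abs_nonneg y))
    (by simp) (abs_lt.1 hyr)
  rwa [(hasSum_centralBinom_div_mul_pow (abs_sq_lt_one hy)).tsum_eq, ← one_div] at h

lemma eqOn_tsum_arcsinCoeff_mul_pow_arcsin :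
    Set.EqOn (fun t => ∑' k, arcsinCoeff k * t ^ (2 * k + 1)) arcsin (Set.Ioo (-1) 1) := by
  have hS : ∀ t ∈ Set.Ioo (-1 : ℝ) 1, HasDerivAt (fun t => ∑' k, arcsinCoeff k * t ^ (2 * k + 1))
      (1 / √(1 - t ^ 2)) t := fun t ht => hasDerivAt_tsum_arcsinCoeff_mul_pow (abs_lt.2 ht)
  have harcsin : ∀ t ∈ Set.Ioo (-1 : ℝ) 1, HasDerivAt arcsin (1 / √(1 - t ^ 2)) t :=
    fun t ht => hasDerivAt_arcsin ht.1.ne' ht.2.ne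
  exact isOpen_Ioo.eqOn_of_deriv_eq isPreconnected_Ioo
    (fun t ht => (hS t ht).differentiableAt.differentiableWithinAt)
    (fun t ht => (harcsin t ht).differentiableAt.differentiableWithinAt)
    (fun t ht => (hS t ht).deriv.trans (harcsin t ht).deriv.symm)
    (show (0 : ℝ) ∈ Set.Ioo (-1) 1 by norm_num) (by simp)

lemma summable_arcsinCoeff : Summable arcsinCoeff := by
  -- each partial sum is the limit as `t → 1⁻` of partial sums of `arcsin t ≤ π / 2`
  refine summable_of_sum_range_le (c := π / 2) arcsinCoeff_nonneg fun N => ?_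
  have hpoly : Filter.Tendsto (fun t : ℝ => ∑ k ∈ range N, arcsinCoeff k * t ^ (2 * k + 1))
      (nhdsWithin 1 (Set.Iio 1)) (nhds (∑ k ∈ range N, arcsinCoeff k)) := by
    refine tendsto_nhdsWithin_of_tendsto_nhds ?_
    have hcont : Continuous fun t : ℝ => ∑ k ∈ range N, arcsinCoeff k * t ^ (2 * k + 1) := by
      fun_prop
    simpa using hcont.tendsto 1
  refine le_of_tendsto hpoly ?_
  filter_upwards [Ioo_mem_nhdsLT (zero_lt_one' ℝ)] with t ht
  have habs : |t| < 1 := abs_lt.2 ⟨by linarith [ht.1], ht.2⟩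
  calc ∑ k ∈ range N, arcsinCoeff k * t ^ (2 * k + 1)
      ≤ ∑' k, arcsinCoeff k * t ^ (2 * k + 1) :=
        (summable_arcsinCoeff_mul_pow habs).sum_le_tsum _
          fun k _ => mul_nonneg (arcsinCoeff_nonneg k) (pow_nonneg ht.1.le _)
    _ = arcsin t := eqOn_tsum_arcsinCoeff_mul_pow_arcsin (abs_lt.1 habs)
    _ ≤ π / 2 := arcsin_le_pi_div_two t

lemma hasSum_arcsinCoeff_mul_pow {t : ℝ} (ht : |t| ≤ 1) :
    HasSum (fun k => arcsinCoeff k * t ^ (2 * k + 1)) (arcsin t) := by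
  have hbound : ∀ k, ∀ s ∈ Set.Icc (-1 : ℝ) 1,
      ‖arcsinCoeff k * s ^ (2 * k + 1)‖ ≤ arcsinCoeff k := fun k s hs => by
    rw [norm_mul, norm_pow, Real.norm_of_nonneg (arcsinCoeff_nonneg k)]
    exact mul_le_of_le_one_right (arcsinCoeff_nonneg k)
      (pow_le_one₀ (norm_nonneg s) (abs_le.2 hs))
  have heq := eqOn_tsum_arcsinCoeff_mul_pow_arcsin.of_subset_closure
    (continuousOn_tsum (fun k => by fun_prop) summable_arcsinCoeff hbound)
    continuous_arcsin.continuousOn Set.Ioo_subset_Icc_self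
    (by rw [closure_Ioo (by norm_num)]) (abs_le.1 ht)
  rw [← heq]
  exact (summable_arcsinCoeff.of_norm_bounded fun k => hbound k t (abs_le.1 ht)).hasSum

section Kernels

variable {ι n : Type*} [Fintype ι]

/-- The coordinates of the tensor power `u ^ ⊗ p`. -/
noncomputable def powFeature (p : ℕ) (u : EuclideanSpace ℝ ι) : EuclideanSpace ℝ (Fin p → ι) :=
  WithLp.toLp 2 fun k => ∏ r, u (k r)

lemma inner_powFeature (p : ℕ) (u v : EuclideanSpace ℝ ι) :
    ⟪powFeature p u, powFeature p v⟫ = ⟪u, v⟫ ^ p := by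
  classical
  simp only [powFeature, PiLp.inner_apply, RCLike.inner_apply, conj_trivial]
  rw [← Fin.prod_const, Fintype.prod_sum]
  simp [prod_mul_distrib]

noncomputable def innerPowMatrix (x : n → EuclideanSpace ℝ ι) (p : ℕ) : Matrix n n ℝ :=
  of fun i j => ⟪x i, x j⟫ ^ p

lemma innerPowMatrix_eq_gram (x : n → EuclideanSpace ℝ ι) (p : ℕ) :
    innerPowMatrix x p = gram ℝ fun i => powFeature p (x i) := by
  ext i j; simp [innerPowMatrix, inner_powFeature]

/-- The Gram matrix `H^∞` of the ReLU neural tangent kernel. -/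
noncomputable def reluKernel (x : n → EuclideanSpace ℝ ι) : Matrix n n ℝ :=
  of fun i j => ⟪x i, x j⟫ * (π - arccos ⟪x i, x j⟫) / (2 * π)

lemma hasSum_arcsinCoeff_smul_innerPowMatrix (x : n → EuclideanSpace ℝ ι) (hx : ∀ i, ‖x i‖ ≤ 1) :
    HasSum (fun k => arcsinCoeff k • innerPowMatrix x (2 * (k + 1)))
      ((2 * π) • reluKernel x - (π / 2) • innerPowMatrix x 1) := by
  refine Pi.hasSum.2 fun i => Pi.hasSum.2 fun j => ?_
  have hij : |⟪x i, x j⟫| ≤ 1 :=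
    (abs_real_inner_le_norm _ _).trans (mul_le_one₀ (hx i) (norm_nonneg _) (hx j))
  have hterm : ∀ k, (arcsinCoeff k • innerPowMatrix x (2 * (k + 1))) i j =
      ⟪x i, x j⟫ * (arcsinCoeff k * ⟪x i, x j⟫ ^ (2 * k + 1)) := fun k => by
    simp only [Matrix.smul_apply, innerPowMatrix, of_apply, smul_eq_mul]; ring
  have hsum : ((2 * π) • reluKernel x - (π / 2) • innerPowMatrix x 1) i j =
      ⟪x i, x j⟫ * arcsin ⟪x i, x j⟫ := by
    simp only [Matrix.sub_apply, Matrix.smul_apply, reluKernel, innerPowMatrix, of_apply,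
      smul_eq_mul, arccos_eq_pi_div_two_sub_arcsin]
    field_simp
    ring
  simpa only [hterm, hsum] using (hasSum_arcsinCoeff_mul_pow hij).mul_left ⟪x i, x j⟫

variable [Fintype n]

lemma dotProduct_innerPowMatrix_mulVec (x : n → EuclideanSpace ℝ ι) (p : ℕ) (z : n → ℝ) :
    z ⬝ᵥ (innerPowMatrix x p *ᵥ z) = ‖∑ i, z i • powFeature p (x i)‖ ^ 2 := by
  rw [innerPowMatrix_eq_gram, ← real_inner_self_eq_norm_sq, ← star_dotProduct_gram_mulVec,
    star_trivial]

lemma dotProduct_innerPowMatrix_mulVec_nonneg (x : n → EuclideanSpace ℝ ι) (p : ℕ)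
    (z : n → ℝ) : 0 ≤ z ⬝ᵥ (innerPowMatrix x p *ᵥ z) := by
  rw [dotProduct_innerPowMatrix_mulVec]; positivity

lemma sq_sum_mul_inner_pow_le (p : ℕ) (β : EuclideanSpace ℝ ι) (x : n → EuclideanSpace ℝ ι)
    (z : n → ℝ) :
    (∑ i, z i * ⟪β, x i⟫ ^ p) ^ 2 ≤ ‖β‖ ^ (2 * p) * (z ⬝ᵥ (innerPowMatrix x p *ᵥ z)) := by
  have hsum : ∑ i, z i * ⟪β, x i⟫ ^ p = ⟪powFeature p β, ∑ i, z i • powFeature p (x i)⟫ := by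
    simp [inner_sum, real_inner_smul_right, inner_powFeature]
  have hβ : ‖β‖ ^ (2 * p) = ‖powFeature p β‖ ^ 2 := by
    rw [← real_inner_self_eq_norm_sq, inner_powFeature, real_inner_self_eq_norm_sq, pow_mul]
  rw [hsum, hβ, dotProduct_innerPowMatrix_mulVec, ← mul_pow, sq_le_sq, abs_mul, abs_norm,
    abs_norm]
  exact abs_real_inner_le_norm _ _

lemma HasSum.dotProduct_mulVec {R κ : Type*} [NonUnitalNonAssocSemiring R] [TopologicalSpace R]
    [IsTopologicalSemiring R] {f : κ → Matrix n n R} {A : Matrix n n R} (h : HasSum f A)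
    (z : n → R) : HasSum (fun k => z ⬝ᵥ (f k *ᵥ z)) (z ⬝ᵥ (A *ᵥ z)) := by
  simp only [dotProduct, mulVec]
  exact hasSum_sum fun i _ => (hasSum_sum fun j _ =>
    (Pi.hasSum.1 (Pi.hasSum.1 h i) j).mul_right (z j)).mul_left (z i)

lemma arcsinCoeff_mul_dotProduct_innerPowMatrix_mulVec_le (x : n → EuclideanSpace ℝ ι)
    (hx : ∀ i, ‖x i‖ ≤ 1) (z : n → ℝ) (k : ℕ) :
    arcsinCoeff k * (z ⬝ᵥ (innerPowMatrix x (2 * (k + 1)) *ᵥ z)) ≤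
      2 * π * (z ⬝ᵥ (reluKernel x *ᵥ z)) := by
  have h := (hasSum_arcsinCoeff_smul_innerPowMatrix x hx).dotProduct_mulVec z
  simp only [smul_mulVec, sub_mulVec, dotProduct_sub, dotProduct_smul, smul_eq_mul] at h
  have hk := le_hasSum h k fun j _ =>
    mul_nonneg (arcsinCoeff_nonneg j) (dotProduct_innerPowMatrix_mulVec_nonneg x _ z)
  have h1 := dotProduct_innerPowMatrix_mulVec_nonneg x 1 z
  nlinarith [pi_pos]

end Kernels

lemma mul_le_of_sq_le_mul_of_mul_le {s c K Q B : ℝ} (hs : 0 ≤ s) (hc : 0 ≤ c) (hK : 0 ≤ K)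
    (hB : 0 ≤ B) (hsQ : s ^ 2 ≤ K * Q) (hQs : c * Q ≤ B * s) : c * s ≤ K * B := by
  rcases hs.eq_or_lt with rfl | hpos
  · rw [mul_zero]; positivity
  refine le_of_mul_le_mul_right ?_ hpos
  nlinarith [mul_le_mul_of_nonneg_left hsQ hc, mul_le_mul_of_nonneg_left hQs hK]

/-- If `yᵢ = α⟨β, xᵢ⟩^{2l}` for unit vectors `xᵢ` with positive definite
ReLU-kernel Gram matrix `H^∞`, then `yᵀ(H^∞)⁻¹y ≤ 2π(2l−1)²α²‖β‖^{4l}`. -/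
theorem stmt_7 (d n : ℕ) (x : Fin n → EuclideanSpace ℝ (Fin d))
    (hx : ∀ i, ‖x i‖ = 1)
    (H : Matrix (Fin n) (Fin n) ℝ)
    (hH : ∀ i j, H i j = (inner ℝ (x i) (x j) : ℝ) *
        (π - arccos (inner ℝ (x i) (x j))) / (2 * π))
    (hHpd : H.PosDef)
    (l : ℕ) (hl : 1 ≤ l)
    (α : ℝ) (β : EuclideanSpace ℝ (Fin d)) (y : Fin n → ℝ)
    (hy : ∀ i, y i = α * (inner ℝ β (x i) : ℝ) ^ (2 * l)) :
    y ⬝ᵥ (H⁻¹ *ᵥ y) ≤ 2 * π * (2 * (l : ℝ) - 1) ^ 2 * α ^ 2 * ‖β‖ ^ (4 * l) := by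
  obtain ⟨m, rfl⟩ : ∃ m, l = m + 1 := ⟨l - 1, by omega⟩
  obtain rfl : H = reluKernel x := Matrix.ext hH
  set z := (reluKernel x)⁻¹ *ᵥ y
  set s := y ⬝ᵥ z
  have hs : z ⬝ᵥ (reluKernel x *ᵥ z) = s := by
    rw [mulVec_mulVec, mul_nonsing_inv _ (hHpd.isUnit.map detMonoidHom), one_mulVec,
      dotProduct_comm]
  have hs0 : 0 ≤ s := hs ▸ star_trivial z ▸ hHpd.posSemidef.dotProduct_mulVec_nonneg z
  have hsQ : s ^ 2 ≤
      α ^ 2 * ‖β‖ ^ (4 * (m + 1)) * (z ⬝ᵥ (innerPowMatrix x (2 * (m + 1)) *ᵥ z)) := by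
    have hsy : s = α * ∑ i, z i * ⟪β, x i⟫ ^ (2 * (m + 1)) := by
      simp only [s, dotProduct, mul_sum]
      exact sum_congr rfl fun i _ => by rw [hy]; ring
    rw [hsy, mul_pow, mul_assoc, show 4 * (m + 1) = 2 * (2 * (m + 1)) by ring]
    exact mul_le_mul_of_nonneg_left (sq_sum_mul_inner_pow_le _ β x z) (sq_nonneg α)
  have hQs := arcsinCoeff_mul_dotProduct_innerPowMatrix_mulVec_le x (fun i => (hx i).le) z m
  rw [hs] at hQs
  have hcs := mul_le_of_sq_le_mul_of_mul_le hs0 (arcsinCoeff_nonneg m) (by positivity)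
    (by positivity) hsQ hQs
  calc s ≤ (2 * m + 1) ^ 2 * arcsinCoeff m * s :=
        le_mul_of_one_le_left hs0 (one_le_sq_mul_arcsinCoeff m)
    _ ≤ (2 * m + 1) ^ 2 * (α ^ 2 * ‖β‖ ^ (4 * (m + 1)) * (2 * π)) := by
        rw [mul_assoc]; exact mul_le_mul_of_nonneg_left hcs (by positivity)
    _ = _ := by push_cast; ring
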